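/- For every n ∈ ℕ the squared norms satisfy h_{n+1}·(d+2an+a)·(d+2an−a)·(d+2an)²·k_n² = (n+1)·(d+an−a)·(−a³n⁴ − 4dcna + dbe + db²n − d²c − ae² − 4cn²a² − 2nade − 2n³a²d + n²adb + bnd² − n²ad² + n²ab² − 2a²en²)·k_{n+1}²·h_n. (Corollary 8) -/

import Mathlib

open Polynomial MeasureTheory

/-- Forward difference operator on real polynomials: `Δp = p(X+1) - p`. -/
noncomputable def polyFwdDiff (p : Polynomial ℝ) : Polynomial ℝ := p.comp (X + 1) - p

/-- Backward difference operator on real polynomials: `∇p = p - p(X-1)`. -/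
noncomputable def polyBwdDiff (p : Polynomial ℝ) : Polynomial ℝ := p - p.comp (X - 1)

/-!
Write `p_j = k_j (X^j + s_j X^(j-1) + t_j X^(j-2) + ⋯)`. The integral `∫ x p_n p_(n+1) dμ` can
be computed in two ways: from `X p_n = (k_n / k_(n+1)) p_(n+1) + (lower degree)` it equals
`(k_n / k_(n+1)) h_(n+1)`, while reducing `X p_(n+1)` modulo `p_(n+2)` and `p_(n+1)` leaves a
polynomial of degree `≤ n` with leading coefficient `γ k_(n+1)`, where
`γ = t_(n+1) - t_(n+2) - (s_(n+1) - s_(n+2)) s_(n+1)`, so it also equals `γ (k_(n+1) / k_n) h_n`.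
Hence `h_(n+1) k_n² = γ k_(n+1)² h_n`.

On the other side, the operator `σ Δ∇ + τ Δ + λ_n` does not raise degrees, so comparing the
coefficients of `X^(n-1)` and `X^(n-2)` in the difference equation for `p_n` gives two linear
equations that determine `s_n` and `t_n` as rational functions of `n`. Substituting them into `γ`
gives the stated formula.
-/

theorem degree_polyFwdDiff_add_one_le (q : ℝ[X]) : (polyFwdDiff q).degree + 1 ≤ q.degree := by
  rcases eq_or_ne q 0 with rfl | hq
  · simp [polyFwdDiff]
  have hΔ : polyFwdDiff q = taylor 1 q - q := by simp [polyFwdDiff, taylor_apply]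
  refine Nat.WithBot.add_one_le_of_lt ?_
  rw [hΔ, ← degree_taylor q 1]
  exact degree_sub_lt_left (degree_taylor q 1) (by simpa using hq) (leadingCoeff_taylor 1 q)

theorem degree_polyBwdDiff_add_one_le (q : ℝ[X]) : (polyBwdDiff q).degree + 1 ≤ q.degree := by
  rcases eq_or_ne q 0 with rfl | hq
  · simp [polyBwdDiff]
  have hBwd : polyBwdDiff q = q - taylor (-1) q := by
    simp [polyBwdDiff, taylor_apply, sub_eq_add_neg]
  refine Nat.WithBot.add_one_le_of_lt ?_
  rw [hBwd]
  exact degree_sub_lt_left (degree_taylor q (-1)).symm hq (leadingCoeff_taylor (-1) q).symm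

noncomputable def hypergeometricOperator (σ τ : ℝ[X]) (lam : ℝ) :
    ℝ[X] →ₗ[ℝ] ℝ[X] where
  toFun q := σ * polyFwdDiff (polyBwdDiff q) + τ * polyFwdDiff q + C lam * q
  map_add' q r := by simp only [polyFwdDiff, polyBwdDiff, add_comp, sub_comp]; ring
  map_smul' c q := by
    simp only [polyFwdDiff, polyBwdDiff, smul_eq_C_mul, mul_comp, C_comp, sub_comp,
      RingHom.id_apply]
    ring

theorem hypergeometricOperator_apply (σ τ : ℝ[X]) (lam : ℝ) (q : ℝ[X]) :
    hypergeometricOperator σ τ lam q =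
      σ * polyFwdDiff (polyBwdDiff q) + τ * polyFwdDiff q + C lam * q :=
  rfl

theorem degree_hypergeometricOperator_le {σ τ : ℝ[X]} (hσ : σ.degree ≤ 2)
    (hτ : τ.degree ≤ 1) (lam : ℝ) (q : ℝ[X]) :
    (hypergeometricOperator σ τ lam q).degree ≤ q.degree := by
  have hΔ := degree_polyFwdDiff_add_one_le q
  have hΔΔ : (polyFwdDiff (polyBwdDiff q)).degree + 2 ≤ q.degree :=
    calc _ = (polyFwdDiff (polyBwdDiff q)).degree + 1 + 1 := by
          rw [add_assoc, one_add_one_eq_two]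
      _ ≤ (polyBwdDiff q).degree + 1 := by gcongr; exact degree_polyFwdDiff_add_one_le _
      _ ≤ q.degree := degree_polyBwdDiff_add_one_le q
  rw [hypergeometricOperator_apply]
  refine (degree_add_le _ _).trans (max_le ((degree_add_le _ _).trans (max_le ?_ ?_)) ?_)
  · calc _ ≤ σ.degree + (polyFwdDiff (polyBwdDiff q)).degree := degree_mul_le _ _
      _ ≤ 2 + (polyFwdDiff (polyBwdDiff q)).degree := by gcongr
      _ ≤ q.degree := by rwa [add_comm]
  · calc _ ≤ τ.degree + (polyFwdDiff q).degree := degree_mul_le _ _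
      _ ≤ 1 + (polyFwdDiff q).degree := by gcongr
      _ ≤ q.degree := by rwa [add_comm]
  · rw [← smul_eq_C_mul]
    exact degree_smul_le lam q

theorem coeff_linearMap_apply_eq_sum {R : Type*} [CommSemiring R] (f : R[X] →ₗ[R] R[X])
    {q : R[X]} {N : ℕ} (hq : q.natDegree < N) (m : ℕ) :
    (f q).coeff m = ∑ j ∈ Finset.range N, q.coeff j * (f (X ^ j)).coeff m := by
  conv_lhs => rw [q.as_sum_range_C_mul_X_pow' hq]
  simp [← smul_eq_C_mul]

/-- Expanding `σ` around `X + 1` and `X - 1` (and `τ` around `X + 1`) makes every term a pure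
power, so coefficients become binomial coefficients with no truncated index. -/
theorem hypergeometricOperator_X_pow (a b c d e lam : ℝ) (j : ℕ) :
    hypergeometricOperator (C a * X ^ 2 + C b * X + C c) (C d * X + C e) lam (X ^ j) =
      C a * (X + 1) ^ (j + 2) + C (b - 2 * a + d) * (X + 1) ^ (j + 1)
        + C (a - b + c + e - d) * (X + 1) ^ j + C a * (X - 1) ^ (j + 2)
        + C (b + 2 * a) * (X - 1) ^ (j + 1) + C (a + b + c) * (X - 1) ^ j
        - C (2 * a) * X ^ (j + 2) - C (2 * b + d) * X ^ (j + 1) + C (lam - 2 * c - e) * X ^ j := by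
  simp only [hypergeometricOperator_apply, polyFwdDiff, polyBwdDiff,
    sub_comp, pow_comp, X_comp, one_comp, map_sub, map_add, map_mul, map_ofNat]
  ring

theorem coeff_X_sub_one_pow {R : Type*} [Ring R] (n k : ℕ) :
    (((X : R[X]) - 1) ^ n).coeff k = (-1) ^ (n - k) * n.choose k := by
  rw [← coeff_X_add_C_pow, C_neg, C_1, sub_eq_add_neg]

section
variable {a b c d e lam : ℝ} {m : ℕ}
local notation "L" => hypergeometricOperator (C a * X ^ 2 + C b * X + C c) (C d * X + C e) lam

theorem coeff_hypergeometricOperator_X_pow_self :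
    (L (X ^ m)).coeff m = a * m * (m - 1) + d * m + lam := by
  rw [hypergeometricOperator_X_pow]
  simp only [coeff_add, coeff_sub, coeff_C_mul, coeff_X_add_one_pow, coeff_X_sub_one_pow,
    coeff_X_pow, add_assoc, Nat.reduceAdd, Nat.cast_add_choose, Nat.add_sub_cancel_left,
    Nat.factorial_succ, left_eq_add, OfNat.ofNat_ne_zero, one_ne_zero, Nat.choose_self,
    Nat.sub_self, pow_zero, if_false, mul_zero, sub_zero]
  push_cast
  field_simp
  ring

theorem coeff_hypergeometricOperator_X_pow_succ :
    (L (X ^ (m + 1))).coeff m = (m + 1) * ((2 * b + d) * m + 2 * e) / 2 := by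
  rw [hypergeometricOperator_X_pow]
  simp only [coeff_add, coeff_sub, coeff_C_mul, coeff_X_add_one_pow, coeff_X_sub_one_pow,
    coeff_X_pow, add_assoc, Nat.reduceAdd, Nat.cast_add_choose, Nat.add_sub_cancel_left,
    Nat.factorial_succ, left_eq_add, OfNat.ofNat_ne_zero, one_ne_zero, if_false, mul_zero,
    sub_zero]
  push_cast
  field_simp
  ring

theorem coeff_hypergeometricOperator_X_pow_add_two :
    (L (X ^ (m + 2))).coeff m =
      (m + 2) * (m + 1) * (a * m * (m - 1) / 12 + d * m / 6 + (2 * c + e) / 2) := by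
  rw [hypergeometricOperator_X_pow]
  simp only [coeff_add, coeff_sub, coeff_C_mul, coeff_X_add_one_pow, coeff_X_sub_one_pow,
    coeff_X_pow, add_assoc, Nat.reduceAdd, Nat.cast_add_choose, Nat.add_sub_cancel_left,
    Nat.factorial_succ, left_eq_add, OfNat.ofNat_ne_zero, if_false, mul_zero, sub_zero]
  push_cast
  field_simp
  ring

theorem coeff_hypergeometricOperator_of_natDegree_le {q : ℝ[X]} (hq : q.natDegree ≤ m + 2) :
    (L q).coeff m = (a * m * (m - 1) + d * m + lam) * q.coeff m
      + (m + 1) * ((2 * b + d) * m + 2 * e) / 2 * q.coeff (m + 1)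
      + (m + 2) * (m + 1) * (a * m * (m - 1) / 12 + d * m / 6 + (2 * c + e) / 2) *
        q.coeff (m + 2) := by
  rw [coeff_linearMap_apply_eq_sum _ (Nat.lt_succ_of_le hq), Finset.sum_range_succ,
    Finset.sum_range_succ, Finset.sum_range_succ, Finset.sum_eq_zero,
    coeff_hypergeometricOperator_X_pow_self, coeff_hypergeometricOperator_X_pow_succ,
    coeff_hypergeometricOperator_X_pow_add_two]
  · ring
  · intro j hj
    refine mul_eq_zero_of_right _ (coeff_eq_zero_of_degree_lt ?_)
    calc _ ≤ (X ^ j : ℝ[X]).degree :=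
          degree_hypergeometricOperator_le degree_quadratic_le degree_linear_le _ _
      _ < m := by rw [degree_X_pow]; exact_mod_cast Finset.mem_range.mp hj

end

section
variable {a b c d e : ℝ}
local notation "L" => hypergeometricOperator (C a * X ^ 2 + C b * X + C c) (C d * X + C e)

noncomputable def hypergeometricEigenvalue (a d : ℝ) (n : ℕ) : ℝ :=
  -(a * n * ((n : ℝ) - 1) + d * n)

theorem coeff_of_hypergeometricOperator_eq_zero {q : ℝ[X]} {n : ℕ} (hq : q.natDegree ≤ n + 1)
    (hL : L (hypergeometricEigenvalue a d (n + 1)) q = 0) :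
    2 * (2 * a * n + d) * q.coeff n = (n + 1) * ((2 * b + d) * n + 2 * e) * q.coeff (n + 1) := by
  have h : (L (hypergeometricEigenvalue a d (n + 1)) q).coeff n = 0 := by rw [hL, coeff_zero]
  rw [coeff_hypergeometricOperator_of_natDegree_le (by omega),
    coeff_eq_zero_of_natDegree_lt (show q.natDegree < n + 2 by omega),
    hypergeometricEigenvalue] at h
  push_cast at h
  linear_combination (-2) * h

theorem coeff_X_mul_of_hypergeometricOperator_eq_zero {q : ℝ[X]} {n : ℕ}
    (hq : q.natDegree ≤ n + 1)
    (hL : L (hypergeometricEigenvalue a d (n + 1)) q = 0) :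
    2 * (a * (2 * n - 1) + d) * (X * q).coeff n =
      n * ((2 * b + d) * (n - 1) + 2 * e) / 2 * q.coeff n
        + (n + 1) * n * (a * (n - 1) * (n - 2) / 12 + d * (n - 1) / 6 + (2 * c + e) / 2) *
          q.coeff (n + 1) := by
  cases n with
  | zero => simp
  | succ m =>
    have h : (L (hypergeometricEigenvalue a d (m + 1 + 1)) q).coeff m = 0 := by
      rw [hL, coeff_zero]
    rw [coeff_hypergeometricOperator_of_natDegree_le hq, hypergeometricEigenvalue] at h
    rw [coeff_X_mul]
    push_cast at h ⊢
    linear_combination (-1) * h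

end

/-- The coefficient `γ` of `P_n` in the three-term recurrence
`X P_(n+1) = P_(n+2) + β P_(n+1) + γ P_n` of the monic normalisations
`P_j = X^j + s_j X^(j-1) + t_j X^(j-2) + ⋯` of the `p_j`. Here `s j = s_(j+1)` and
`t j = t_(j+1)`; reading `t_(j+1)` off `X * p (j + 1)` gives `t_1 = 0` without a truncated index. -/
noncomputable def recurrenceCoeff (p : ℕ → ℝ[X]) (n : ℕ) : ℝ :=
  let s (j : ℕ) := (p (j + 1)).coeff j / (p (j + 1)).coeff (j + 1)
  let t (j : ℕ) := (X * p (j + 1)).coeff j / (p (j + 1)).coeff (j + 1)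
  t n - t (n + 1) - (s n - s (n + 1)) * s n

structure IsOrthogonalFamily (μ : Measure ℝ) (p : ℕ → ℝ[X]) : Prop where
  degree_eq : ∀ n, (p n).degree = n
  integrable : ∀ q : ℝ[X], Integrable (fun x => q.eval x) μ
  orthogonal : ∀ m n, m ≠ n → ∫ x, (p m).eval x * (p n).eval x ∂μ = 0

namespace IsOrthogonalFamily

variable {μ : Measure ℝ} {p : ℕ → ℝ[X]}

theorem natDegree_eq (hp : IsOrthogonalFamily μ p) (n : ℕ) : (p n).natDegree = n :=
  natDegree_eq_of_degree_eq_some (hp.degree_eq n)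

theorem integral_mul_sub_C_mul (hp : IsOrthogonalFamily μ p) (f q r : ℝ[X]) (c : ℝ) :
    ∫ x, f.eval x * (q - C c * r).eval x ∂μ =
      ∫ x, f.eval x * q.eval x ∂μ - c * ∫ x, f.eval x * r.eval x ∂μ := by
  have hint (g h : ℝ[X]) : Integrable (fun x => g.eval x * h.eval x) μ := by
    simpa using hp.integrable (g * h)
  simp only [eval_sub, eval_mul, eval_C, mul_sub, mul_left_comm _ c]
  rw [integral_sub (hint f q) ((hint f r).const_mul c), integral_const_mul]

theorem degree_sub_C_mul_lt (hp : IsOrthogonalFamily μ p) {q : ℝ[X]} {n : ℕ}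
    (hq : q.degree ≤ n) :
    (q - C (q.coeff n / (p n).coeff n) * p n).degree < n := by
  rw [degree_lt_iff_coeff_zero]
  intro i hi
  rw [coeff_sub, coeff_C_mul]
  rcases hi.eq_or_lt with rfl | hlt
  · rw [div_mul_cancel₀ _ (coeff_ne_zero_of_eq_degree (hp.degree_eq _)), sub_self]
  · have hqi : q.coeff i = 0 :=
      coeff_eq_zero_of_degree_lt (hq.trans_lt (by exact_mod_cast hlt))
    have hpi : (p n).coeff i = 0 := coeff_eq_zero_of_natDegree_lt (by rwa [hp.natDegree_eq])
    rw [hqi, hpi, mul_zero, sub_zero]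

theorem integral_mul_eq_zero_of_degree_lt (hp : IsOrthogonalFamily μ p) {m : ℕ} {q : ℝ[X]}
    (hq : q.degree < m) : ∫ x, (p m).eval x * q.eval x ∂μ = 0 := by
  suffices ∀ N ≤ m, ∀ q : ℝ[X], q.degree < N →
      ∫ x, (p m).eval x * q.eval x ∂μ = 0 from this m le_rfl q hq
  intro N
  induction N with
  | zero =>
    intro _ q hq
    rw [Nat.cast_zero, Nat.WithBot.lt_zero_iff, degree_eq_bot] at hq
    simp [hq]
  | succ N ih =>
    intro hN q hq
    have h := hp.integral_mul_sub_C_mul (p m) q (p N) (q.coeff N / (p N).coeff N)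
    rwa [hp.orthogonal m N (by omega), mul_zero, sub_zero,
      ih (by omega) _ (hp.degree_sub_C_mul_lt (Order.le_of_lt_succ hq)), eq_comm] at h

theorem integral_mul_eq_of_degree_le (hp : IsOrthogonalFamily μ p) {n : ℕ} {q : ℝ[X]}
    (hq : q.degree ≤ n) :
    ∫ x, (p n).eval x * q.eval x ∂μ =
      q.coeff n / (p n).coeff n * ∫ x, (p n).eval x ^ 2 ∂μ := by
  have h := hp.integral_mul_sub_C_mul (p n) q (p n) (q.coeff n / (p n).coeff n)
  rw [hp.integral_mul_eq_zero_of_degree_lt (hp.degree_sub_C_mul_lt hq)] at h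
  simp_rw [sq]
  linarith

theorem integral_sq_succ_mul_coeff_sq (hp : IsOrthogonalFamily μ p) (n : ℕ) :
    (∫ x, (p (n + 1)).eval x ^ 2 ∂μ) * (p n).coeff n ^ 2 =
      recurrenceCoeff p n * (p (n + 1)).coeff (n + 1) ^ 2 * ∫ x, (p n).eval x ^ 2 ∂μ := by
  have hk₀ := coeff_ne_zero_of_eq_degree (hp.degree_eq n)
  have hk₁ := coeff_ne_zero_of_eq_degree (hp.degree_eq (n + 1))
  have hk₂ := coeff_ne_zero_of_eq_degree (hp.degree_eq (n + 2))
  have hdeg_X_mul (j : ℕ) : (X * p j).degree ≤ ↑(j + 1) := by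
    rw [mul_comm, degree_mul_X, hp.degree_eq]; norm_cast
  have htop : ∫ x, (p (n + 1)).eval x * (X * p n).eval x ∂μ =
      (p n).coeff n / (p (n + 1)).coeff (n + 1) * ∫ x, (p (n + 1)).eval x ^ 2 ∂μ := by
    rw [hp.integral_mul_eq_of_degree_le (hdeg_X_mul n), coeff_X_mul]
  set q₁ :=
    X * p (n + 1) - C ((X * p (n + 1)).coeff (n + 2) / (p (n + 2)).coeff (n + 2)) * p (n + 2)
  set q₂ := q₁ - C (q₁.coeff (n + 1) / (p (n + 1)).coeff (n + 1)) * p (n + 1)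
  have hq₁ : q₁.degree < ↑(n + 2) := hp.degree_sub_C_mul_lt (hdeg_X_mul (n + 1))
  have hq₂ : q₂.degree < ↑(n + 1) := hp.degree_sub_C_mul_lt (Order.le_of_lt_succ hq₁)
  have hbot : ∫ x, (p n).eval x * (X * p (n + 1)).eval x ∂μ =
      q₂.coeff n / (p n).coeff n * ∫ x, (p n).eval x ^ 2 ∂μ := by
    rw [← hp.integral_mul_eq_of_degree_le (Order.le_of_lt_succ hq₂), hp.integral_mul_sub_C_mul,
      hp.integral_mul_sub_C_mul, hp.orthogonal n (n + 2) (by omega),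
      hp.orthogonal n (n + 1) (by omega)]
    ring
  have hcoeff : q₂.coeff n = recurrenceCoeff p n * (p (n + 1)).coeff (n + 1) := by
    simp only [q₂, q₁, recurrenceCoeff, coeff_sub, coeff_C_mul, coeff_X_mul]
    field_simp
  have hswap : ∫ x, (p (n + 1)).eval x * (X * p n).eval x ∂μ =
      ∫ x, (p n).eval x * (X * p (n + 1)).eval x ∂μ := by
    simp only [eval_mul, eval_X]; congr 1; ext x; ring
  rw [hswap, hbot, hcoeff] at htop
  field_simp at htop
  linear_combination -htop

end IsOrthogonalFamily

def normRatioQuartic (a b c d e n : ℝ) : ℝ :=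
  -(a ^ 3) * n ^ 4 - 4 * d * c * n * a + d * b * e + d * b ^ 2 * n - d ^ 2 * c - a * e ^ 2
    - 4 * c * n ^ 2 * a ^ 2 - 2 * n * a * d * e - 2 * n ^ 3 * a ^ 2 * d + n ^ 2 * a * d * b
    + b * n * d ^ 2 - n ^ 2 * a * d ^ 2 + n ^ 2 * a * b ^ 2 - 2 * a ^ 2 * e * n ^ 2

theorem gamma_mul_eq_of_coeff_eqs {a b c d e n s₁ s₂ t₁ t₂ : ℝ}
    (hD : 2 * a * (n + 1) + d ≠ 0)
    (hs₁ : 2 * (2 * a * n + d) * s₁ = (n + 1) * ((2 * b + d) * n + 2 * e))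
    (hs₂ : 2 * (2 * a * (n + 1) + d) * s₂ = (n + 2) * ((2 * b + d) * (n + 1) + 2 * e))
    (ht₁ : 2 * (a * (2 * n - 1) + d) * t₁ = n * ((2 * b + d) * (n - 1) + 2 * e) / 2 * s₁
      + (n + 1) * n * (a * (n - 1) * (n - 2) / 12 + d * (n - 1) / 6 + (2 * c + e) / 2))
    (ht₂ : 2 * (a * (2 * n + 1) + d) * t₂ = (n + 1) * ((2 * b + d) * n + 2 * e) / 2 * s₂
      + (n + 2) * (n + 1) * (a * n * (n - 1) / 12 + d * n / 6 + (2 * c + e) / 2)) :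
    (t₁ - t₂ - (s₁ - s₂) * s₁) *
        ((d + 2 * a * n + a) * (d + 2 * a * n - a) * (d + 2 * a * n) ^ 2) =
      (n + 1) * (d + a * n - a) * normRatioQuartic a b c d e n := by
  -- Eliminating `t₁, t₂` and then `s₁, s₂` only requires clearing the denominator of
  -- `s₂`: the others cancel against the factors on the left.
  refine mul_left_cancel₀ hD ?_
  unfold normRatioQuartic
  linear_combination
    ((2 * a * (n + 1) + d) * (a * (2 * n + 1) + d) * (2 * a * n + d) ^ 2 / 2) * ht₁
    - ((2 * a * (n + 1) + d) * (a * (2 * n - 1) + d) * (2 * a * n + d) ^ 2 / 2) * ht₂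
    + ((2 * a * (n + 1) + d) * (a * (2 * n + 1) + d) * (2 * a * n + d)
          * (n * ((2 * b + d) * (n - 1) + 2 * e) / 2) / 4
        - (2 * a * (n + 1) + d) * (a * (2 * n + 1) + d) * (a * (2 * n - 1) + d)
          * (2 * (2 * a * n + d) * s₁ + (n + 1) * ((2 * b + d) * n + 2 * e)) / 4
        + (a * (2 * n + 1) + d) * (a * (2 * n - 1) + d) * (2 * a * n + d)
          * (2 * (2 * a * (n + 1) + d) * s₂) / 4) * hs₁
    + (-(a * (2 * n - 1) + d) * (2 * a * n + d) ^ 2 * ((n + 1) * ((2 * b + d) * n + 2 * e) / 2) / 4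
        + (a * (2 * n + 1) + d) * (a * (2 * n - 1) + d) * (2 * a * n + d)
          * ((n + 1) * ((2 * b + d) * n + 2 * e)) / 4) * hs₂

theorem recurrenceCoeff_mul_eq {a b c d e : ℝ} {p : ℕ → ℝ[X]}
    (hdeg : ∀ n : ℕ, (p n).degree = n)
    (hde : ∀ n : ℕ, hypergeometricOperator (C a * X ^ 2 + C b * X + C c) (C d * X + C e)
      (hypergeometricEigenvalue a d n) (p n) = 0)
    {n : ℕ} (hD : 2 * a * (n + 1) + d ≠ 0) :
    recurrenceCoeff p n * ((d + 2 * a * n + a) * (d + 2 * a * n - a) * (d + 2 * a * n) ^ 2) =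
      (n + 1) * (d + a * n - a) * normRatioQuartic a b c d e n := by
  have hnat (j : ℕ) : (p j).natDegree ≤ j := (natDegree_eq_of_degree_eq_some (hdeg j)).le
  have hk₁ := coeff_ne_zero_of_eq_degree (hdeg (n + 1))
  have hk₂ := coeff_ne_zero_of_eq_degree (hdeg (n + 1 + 1))
  have hs₁ := coeff_of_hypergeometricOperator_eq_zero (hnat (n + 1)) (hde (n + 1))
  have hs₂ := coeff_of_hypergeometricOperator_eq_zero (n := n + 1) (hnat _) (hde _)
  have ht₁ := coeff_X_mul_of_hypergeometricOperator_eq_zero (hnat (n + 1)) (hde (n + 1))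
  have ht₂ := coeff_X_mul_of_hypergeometricOperator_eq_zero (n := n + 1) (hnat _) (hde _)
  push_cast at hs₂ ht₂
  apply gamma_mul_eq_of_coeff_eqs hD
  · field_simp
    linear_combination hs₁
  · field_simp
    linear_combination hs₂
  · field_simp
    linear_combination 144 * ht₁
  · field_simp
    linear_combination 144 * ht₂

theorem discrete_squared_norm_ratio_general
    (a b c d e : ℝ)
    (had : ∀ m : ℤ, -3 ≤ m → a * m + d ≠ 0)
    (p : ℕ → Polynomial ℝ) (k : ℕ → ℝ)
    (hdeg : ∀ n : ℕ, (p n).degree = n)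
    (hlead : ∀ n : ℕ, (p n).coeff n = k n)
    (hde : ∀ n : ℕ,
      (Polynomial.C a * X ^ 2 + Polynomial.C b * X + Polynomial.C c) *
          polyFwdDiff (polyBwdDiff (p n)) +
        (Polynomial.C d * X + Polynomial.C e) * polyFwdDiff (p n) +
        Polynomial.C (-(a * n * ((n : ℝ) - 1) + d * n)) * p n = 0)
    (μ : Measure ℝ)
    (hint : ∀ q : Polynomial ℝ, Integrable (fun x => q.eval x) μ)
    (horth : ∀ m n : ℕ, m ≠ n → ∫ x, (p m).eval x * (p n).eval x ∂μ = 0)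
    (h : ℕ → ℝ)
    (hh : ∀ n : ℕ, h n = ∫ x, ((p n).eval x) ^ 2 ∂μ) :
    ∀ n : ℕ,
      h (n + 1) * (d + 2 * a * n + a) * (d + 2 * a * n - a) * (d + 2 * a * n) ^ 2 *
          (k n) ^ 2 =
        ((n : ℝ) + 1) * (d + a * n - a) *
          (-(a ^ 3) * (n : ℝ) ^ 4 - 4 * d * c * n * a + d * b * e + d * b ^ 2 * n -
            d ^ 2 * c - a * e ^ 2 - 4 * c * (n : ℝ) ^ 2 * a ^ 2 - 2 * n * a * d * e -
            2 * (n : ℝ) ^ 3 * a ^ 2 * d + (n : ℝ) ^ 2 * a * d * b + b * n * d ^ 2 -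
            (n : ℝ) ^ 2 * a * d ^ 2 + (n : ℝ) ^ 2 * a * b ^ 2 -
            2 * a ^ 2 * e * (n : ℝ) ^ 2) *
          (k (n + 1)) ^ 2 * h n := by
  intro n
  have hp : IsOrthogonalFamily μ p := ⟨hdeg, hint, horth⟩
  have hD : 2 * a * ((n : ℝ) + 1) + d ≠ 0 := by
    have := had (2 * n + 2) (by omega)
    push_cast at this
    convert this using 1
    ring
  have hγ := recurrenceCoeff_mul_eq hdeg hde hD
  have hnorm := hp.integral_sq_succ_mul_coeff_sq n
  rw [normRatioQuartic] at hγ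
  rw [hh, hh, ← hlead, ← hlead]
  linear_combination ((d + 2 * a * n + a) * (d + 2 * a * n - a) * (d + 2 * a * n) ^ 2) * hnorm
    + (p (n + 1)).coeff (n + 1) ^ 2 * (∫ x, (p n).eval x ^ 2 ∂μ) * hγ

theorem discrete_squared_norm_ratio
    (a b c d e : ℝ)
    (had : ∀ m : ℤ, -3 ≤ m → a * m + d ≠ 0)
    (p : ℕ → Polynomial ℝ) (k : ℕ → ℝ)
    (hdeg : ∀ n : ℕ, (p n).degree = n)
    (hlead : ∀ n : ℕ, (p n).coeff n = k n)
    (hk0 : ∀ n : ℕ, k n ≠ 0)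
    (hde : ∀ n : ℕ,
      (Polynomial.C a * X ^ 2 + Polynomial.C b * X + Polynomial.C c) *
          polyFwdDiff (polyBwdDiff (p n)) +
        (Polynomial.C d * X + Polynomial.C e) * polyFwdDiff (p n) +
        Polynomial.C (-(a * n * ((n : ℝ) - 1) + d * n)) * p n = 0)
    (μ : Measure ℝ)
    (hint : ∀ q : Polynomial ℝ, Integrable (fun x => q.eval x) μ)
    (horth : ∀ m n : ℕ, m ≠ n → ∫ x, (p m).eval x * (p n).eval x ∂μ = 0)
    (h : ℕ → ℝ)
    (hh : ∀ n : ℕ, h n = ∫ x, ((p n).eval x) ^ 2 ∂μ)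
    (hh0 : ∀ n : ℕ, h n ≠ 0) :
    ∀ n : ℕ,
      h (n + 1) * (d + 2 * a * n + a) * (d + 2 * a * n - a) * (d + 2 * a * n) ^ 2 *
          (k n) ^ 2 =
        ((n : ℝ) + 1) * (d + a * n - a) *
          (-(a ^ 3) * (n : ℝ) ^ 4 - 4 * d * c * n * a + d * b * e + d * b ^ 2 * n -
            d ^ 2 * c - a * e ^ 2 - 4 * c * (n : ℝ) ^ 2 * a ^ 2 - 2 * n * a * d * e -
            2 * (n : ℝ) ^ 3 * a ^ 2 * d + (n : ℝ) ^ 2 * a * d * b + b * n * d ^ 2 -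
            (n : ℝ) ^ 2 * a * d ^ 2 + (n : ℝ) ^ 2 * a * b ^ 2 -
            2 * a ^ 2 * e * (n : ℝ) ^ 2) *
          (k (n + 1)) ^ 2 * h n :=
  discrete_squared_norm_ratio_general a b c d e had p k hdeg hlead hde μ hint horth h hh
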